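/- There exists a constant C > 0 depending only on m and n such that for all δ > 0, all x ∈ ℝⁿ, and all f_j ∈ C_c^∞(ℝⁿ) (j = 1,…,m), ∫_{{(y₁,…,y_m) : Σ_{j=1}^m |x−y_j| ≥ δ}} (∏_{j=1}^m |f_j(y_j)|) / (Σ_{j=1}^m |x−y_j|)^{nm+1} dy₁…dy_m ≤ (C/δ) M(f⃗)(x), where M(f⃗)(x) = sup_{Q∋x} ∏_{j=1}^m |Q|^{-1} ∫_Q |f_j| is the multilinear maximal function. -/

import Mathlib

open MeasureTheory Metric Filter ENNReal

/-- The (closed) cube of center `c` and half side-length `r` in `ℝⁿ`. -/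
def cube {n : ℕ} (c : EuclideanSpace ℝ (Fin n)) (r : ℝ) : Set (EuclideanSpace ℝ (Fin n)) :=
  {y | ∀ i, |y i - c i| ≤ r}

/-- The multilinear Hardy–Littlewood maximal function
`M(f⃗)(x) = sup_{Q ∋ x} ∏_j |Q|⁻¹ ∫_Q |f_j|`, supremum over cubes `Q` containing `x`. -/
noncomputable def multiMax {n m : ℕ} (f : Fin m → EuclideanSpace ℝ (Fin n) → ℝ)
    (x : EuclideanSpace ℝ (Fin n)) : ℝ≥0∞ :=
  ⨆ (c : EuclideanSpace ℝ (Fin n)) (r : ℝ) (_ : 0 < r) (_ : x ∈ cube c r),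
    ∏ j, (volume (cube c r))⁻¹ * ∫⁻ y in cube c r, ENNReal.ofReal |f j y|

lemma lintegral_fin_pi_prod {m : ℕ} {E : Type*} [MeasureSpace E]
    [SigmaFinite (volume : Measure E)] (g : Fin m → E → ℝ≥0∞) (hg : ∀ j, Measurable (g j)) :
    ∫⁻ y : Fin m → E, ∏ j, g j (y j) = ∏ j, ∫⁻ x, g j x := by
  induction m with
  | zero =>
      simp only [Finset.univ_eq_empty, Finset.prod_empty, lintegral_one]
      rw [volume_pi, Measure.pi_univ]
      simp
  | succ k ih =>
      have hmp := (measurePreserving_piFinSuccAbove (fun _ : Fin (k+1) => (volume : Measure E)) 0)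
      rw [volume_pi, ((hmp.symm (MeasurableEquiv.piFinSuccAbove _ 0))).lintegral_map_equiv _
        (MeasurableEquiv.piFinSuccAbove _ 0).symm]
      have heq : ∀ z : E × (Fin k → E),
          (∏ j, g j (((MeasurableEquiv.piFinSuccAbove (fun _ : Fin (k+1) => E) 0).symm z) j))
            = g 0 z.1 * ∏ j : Fin k, g j.succ (z.2 j) := by
        intro z
        have h0 : ((MeasurableEquiv.piFinSuccAbove (fun _ : Fin (k+1) => E) 0).symm z) 0 = z.1 := by
          simp [MeasurableEquiv.piFinSuccAbove, Fin.insertNthEquiv]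
        have hs : ∀ j : Fin k,
            ((MeasurableEquiv.piFinSuccAbove (fun _ : Fin (k+1) => E) 0).symm z) j.succ = z.2 j := by
          intro j
          simp [MeasurableEquiv.piFinSuccAbove, Fin.insertNthEquiv]
        rw [Fin.prod_univ_succ, h0]
        exact congrArg _ (Finset.prod_congr rfl fun j _ => by rw [hs])
      simp_rw [heq]
      rw [lintegral_prod_mul (f := fun x => g 0 x)
        (g := fun y : Fin k → E => ∏ j : Fin k, g j.succ (y j)) (hg 0).aemeasurable
        ((Finset.measurable_prod _ (fun (j : Fin k) _ =>
          (hg j.succ).comp (measurable_pi_apply j))).aemeasurable)]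
      rw [Fin.prod_univ_succ]
      congr 1
      rw [← ih (fun j => g j.succ) (fun j => hg j.succ), volume_pi]

lemma cube_eq_preimage {n : ℕ} (c : EuclideanSpace ℝ (Fin n)) (r : ℝ) :
    cube c r = ((MeasurableEquiv.toLp 2 (Fin n → ℝ)).symm) ⁻¹'
      (Set.pi Set.univ fun i => Set.Icc (c i - r) (c i + r)) := by
  ext y
  simp only [cube, Set.mem_setOf_eq, Set.mem_preimage, Set.mem_pi, Set.mem_univ, forall_true_left,
    Set.mem_Icc, true_implies, MeasurableEquiv.toLp_symm_apply]
  constructor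
  · intro h i
    have := abs_le.mp (h i)
    constructor <;> [linarith [this.1]; linarith [this.2]]
  · intro h i
    rw [abs_le]
    constructor <;> [linarith [(h i).1]; linarith [(h i).2]]

lemma measurableSet_cube {n : ℕ} (c : EuclideanSpace ℝ (Fin n)) (r : ℝ) :
    MeasurableSet (cube c r) := by
  rw [cube_eq_preimage]
  exact ((MeasurableEquiv.toLp 2 (Fin n → ℝ)).symm).measurable
    (MeasurableSet.univ_pi fun i => measurableSet_Icc)

lemma volume_cube {n : ℕ} (c : EuclideanSpace ℝ (Fin n)) {r : ℝ} (hr : 0 ≤ r) :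
    volume (cube c r) = ENNReal.ofReal ((2 * r) ^ n) := by
  rw [cube_eq_preimage,
    (EuclideanSpace.volume_preserving_symm_measurableEquiv_toLp (Fin n)).measure_preimage
      ((MeasurableSet.univ_pi fun i => measurableSet_Icc).nullMeasurableSet)]
  rw [volume_pi, Measure.pi_pi]
  have : ∀ i : Fin n, volume (Set.Icc (c i - r) (c i + r)) = ENNReal.ofReal (2 * r) := by
    intro i
    rw [Real.volume_Icc]
    ring_nf
  simp_rw [this]
  rw [Finset.prod_const, Finset.card_univ, Fintype.card_fin,
    ← ENNReal.ofReal_pow (by linarith)]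

lemma mem_cube_self {n : ℕ} (c : EuclideanSpace ℝ (Fin n)) {r : ℝ} (hr : 0 ≤ r) :
    c ∈ cube c r := fun i => by simp [hr]

lemma mem_cube_of_dist_le {n : ℕ} {c y : EuclideanSpace ℝ (Fin n)} {r : ℝ}
    (h : dist y c ≤ r) : y ∈ cube c r := by
  intro i
  have h1 : |y i - c i| = dist (y i) (c i) := (Real.dist_eq _ _).symm
  have h2 : dist (y i) (c i) ≤ dist y c := by
    rw [EuclideanSpace.dist_eq]
    have := Real.sqrt_le_sqrt (Finset.single_le_sum
      (f := fun i => dist (y i) (c i) ^ 2) (fun i _ => sq_nonneg _) (Finset.mem_univ i))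
    rwa [Real.sqrt_sq dist_nonneg] at this
  linarith [h1 ▸ h2]

lemma exists_dyadic {t : ℝ} (ht : 1 ≤ t) : ∃ k : ℕ, (2:ℝ)^k ≤ t ∧ t < 2^(k+1) := by
  have ht0 : (0:ℝ) ≤ t := by linarith
  have hfl : 1 ≤ ⌊t⌋₊ := Nat.le_floor (by exact_mod_cast ht)
  refine ⟨Nat.log 2 ⌊t⌋₊, ?_, ?_⟩
  · calc ((2:ℝ))^(Nat.log 2 ⌊t⌋₊) = ((2 ^ Nat.log 2 ⌊t⌋₊ : ℕ) : ℝ) := by push_cast; ring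
      _ ≤ (⌊t⌋₊ : ℝ) := by exact_mod_cast Nat.pow_log_le_self 2 (by omega)
      _ ≤ t := Nat.floor_le ht0
  · have h1 : ⌊t⌋₊ < 2 ^ (Nat.log 2 ⌊t⌋₊ + 1) := Nat.lt_pow_succ_log_self one_lt_two _
    have h2 : (⌊t⌋₊ : ℝ) + 1 ≤ ((2 : ℕ) : ℝ) ^ (Nat.log 2 ⌊t⌋₊ + 1) := by
      exact_mod_cast Nat.succ_le_of_lt h1
    have h3 : t < (⌊t⌋₊ : ℝ) + 1 := Nat.lt_floor_add_one t
    push_cast at h2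
    linarith

/-- Far-from-diagonal estimate: there is `C = C(m,n) > 0` such that for all `δ > 0`,
all `x`, and all `f_j ∈ C_c^∞(ℝⁿ)`,
`∫_{Σ_j |x−y_j| ≥ δ} (∏_j |f_j(y_j)|) (Σ_j |x−y_j|)^{-(nm+1)} dy⃗ ≤ (C/δ) M(f⃗)(x)`. -/
theorem stmt_10 (n m : ℕ) (hn : 0 < n) (hm : 0 < m) :
    ∃ C : ℝ, 0 < C ∧ ∀ (δ : ℝ), 0 < δ → ∀ (x : EuclideanSpace ℝ (Fin n))
      (f : Fin m → EuclideanSpace ℝ (Fin n) → ℝ),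
      (∀ j, ContDiff ℝ (⊤ : ℕ∞) (f j) ∧ HasCompactSupport (f j)) →
      (∫⁻ y in {y : Fin m → EuclideanSpace ℝ (Fin n) | δ ≤ ∑ j, dist x (y j)},
          (∏ j, ENNReal.ofReal |f j (y j)|) /
            (ENNReal.ofReal (∑ j, dist x (y j))) ^ ((n * m : ℝ) + 1))
        ≤ ENNReal.ofReal (C / δ) * multiMax f x := by
  refine ⟨2 ^ (2 * (n * m) + 1), by positivity, ?_⟩
  intro δ hδ x f hf
  have hgm : ∀ j, Measurable (fun y => ENNReal.ofReal |f j y|) :=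
    fun j => ((hf j).1.continuous.abs.measurable).ennreal_ofReal
  -- the annuli
  set S : ℕ → Set (Fin m → EuclideanSpace ℝ (Fin n)) := fun k =>
    (fun y : Fin m → EuclideanSpace ℝ (Fin n) => ∑ j, dist x (y j)) ⁻¹'
      (Set.Ico ((2:ℝ)^k * δ) (2^(k+1) * δ)) with hS
  have hcont : Continuous (fun y : Fin m → EuclideanSpace ℝ (Fin n) => ∑ j, dist x (y j)) :=
    continuous_finset_sum _ fun j _ => continuous_const.dist (continuous_apply j)
  have hSmeas : ∀ k, MeasurableSet (S k) := fun k => hcont.measurable measurableSet_Ico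
  have h_sub : {y : Fin m → EuclideanSpace ℝ (Fin n) | δ ≤ ∑ j, dist x (y j)} ⊆ ⋃ k, S k := by
    intro y hy
    have hy' : δ ≤ ∑ j, dist x (y j) := hy
    have ht : 1 ≤ (∑ j, dist x (y j)) / δ := (le_div_iff₀ hδ).mpr (by linarith)
    obtain ⟨k, hk1, hk2⟩ := exists_dyadic ht
    refine Set.mem_iUnion.mpr ⟨k, ?_⟩
    constructor
    · calc (2:ℝ)^k * δ ≤ ((∑ j, dist x (y j)) / δ) * δ := by
            exact mul_le_mul_of_nonneg_right hk1 hδ.le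
        _ = ∑ j, dist x (y j) := by field_simp
    · calc (∑ j, dist x (y j)) = ((∑ j, dist x (y j)) / δ) * δ := by field_simp
        _ < 2^(k+1) * δ := by exact mul_lt_mul_of_pos_right hk2 hδ
  -- the key cube estimate
  have key : ∀ r : ℝ, 0 < r →
      (∏ j, ∫⁻ y in cube x r, ENNReal.ofReal |f j y|)
        ≤ ENNReal.ofReal ((2*r)^n) ^ m * multiMax f x := by
    intro r hr
    have hVeq : volume (cube x r) = ENNReal.ofReal ((2*r)^n) := volume_cube x hr.le
    have hV0 : volume (cube x r) ≠ 0 := by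
      rw [hVeq, ne_eq, ENNReal.ofReal_eq_zero, not_le]; positivity
    have hVtop : volume (cube x r) ≠ ⊤ := by rw [hVeq]; exact ofReal_ne_top
    have h1 : (∏ j, ∫⁻ y in cube x r, ENNReal.ofReal |f j y|)
        = volume (cube x r) ^ m *
          ∏ j, (volume (cube x r))⁻¹ * ∫⁻ y in cube x r, ENNReal.ofReal |f j y| := by
      rw [Finset.prod_mul_distrib, Finset.prod_const, Finset.card_univ, Fintype.card_fin,
        ← mul_assoc, ← mul_pow, ENNReal.mul_inv_cancel hV0 hVtop, one_pow, one_mul]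
    rw [h1]
    have hP : (∏ j, (volume (cube x r))⁻¹ * ∫⁻ y in cube x r, ENNReal.ofReal |f j y|)
        ≤ multiMax f x :=
      le_iSup_of_le x (le_iSup_of_le r (le_iSup_of_le hr
        (le_iSup_of_le (mem_cube_self x hr.le) le_rfl)))
    calc volume (cube x r) ^ m *
          ∏ j, (volume (cube x r))⁻¹ * ∫⁻ y in cube x r, ENNReal.ofReal |f j y|
        ≤ volume (cube x r) ^ m * multiMax f x := mul_le_mul_right hP _
      _ = ENNReal.ofReal ((2*r)^n) ^ m * multiMax f x := by rw [hVeq]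
  -- bound on each annulus
  have step : ∀ k : ℕ,
      (∫⁻ y in S k, (∏ j, ENNReal.ofReal |f j (y j)|) /
          (ENNReal.ofReal (∑ j, dist x (y j))) ^ ((n * m : ℝ) + 1))
        ≤ (ENNReal.ofReal ((2:ℝ)^(2*(n*m)) / δ) * multiMax f x) * (ENNReal.ofReal (1/2))^k := by
    intro k
    set r : ℝ := 2^(k+1) * δ with hr
    have hrpos : 0 < r := by positivity
    set D : ℝ≥0∞ := ENNReal.ofReal (((2:ℝ)^k * δ)^(n*m+1)) with hD
    have hD0 : D ≠ 0 := by
      rw [hD, ne_eq, ENNReal.ofReal_eq_zero, not_le]; positivity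
    have hDinvtop : D⁻¹ ≠ ⊤ := ENNReal.inv_ne_top.mpr hD0
    have hpt : ∀ y ∈ S k,
        (∏ j, ENNReal.ofReal |f j (y j)|) /
            (ENNReal.ofReal (∑ j, dist x (y j))) ^ ((n * m : ℝ) + 1)
          ≤ D⁻¹ * ∏ j, ENNReal.ofReal |f j (y j)| := by
      intro y hy
      have h1 : (2:ℝ)^k * δ ≤ ∑ j, dist x (y j) := hy.1
      have hpow : D ≤ (ENNReal.ofReal (∑ j, dist x (y j))) ^ ((n * m : ℝ) + 1) := by
        have hcast : ((n * m : ℝ) + 1) = ((n*m+1 : ℕ) : ℝ) := by push_cast; ring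
        rw [hcast, ENNReal.rpow_natCast, hD, ← ENNReal.ofReal_pow (by positivity)]
        exact ENNReal.ofReal_le_ofReal (pow_le_pow_left₀ (by positivity) h1 _)
      calc (∏ j, ENNReal.ofReal |f j (y j)|) /
            (ENNReal.ofReal (∑ j, dist x (y j))) ^ ((n * m : ℝ) + 1)
          ≤ (∏ j, ENNReal.ofReal |f j (y j)|) / D := ENNReal.div_le_div_left hpow _
        _ = D⁻¹ * ∏ j, ENNReal.ofReal |f j (y j)| := by rw [div_eq_mul_inv, mul_comm]
    have hsub2 : S k ⊆ Set.univ.pi (fun _ : Fin m => cube x r) := by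
      intro y hy
      rw [Set.mem_univ_pi]
      intro j
      apply mem_cube_of_dist_le
      have : dist (y j) x ≤ ∑ j', dist x (y j') := by
        rw [dist_comm]
        exact Finset.single_le_sum (fun j' _ => dist_nonneg) (Finset.mem_univ j)
      exact this.trans hy.2.le
    calc (∫⁻ y in S k, (∏ j, ENNReal.ofReal |f j (y j)|) /
            (ENNReal.ofReal (∑ j, dist x (y j))) ^ ((n * m : ℝ) + 1))
        ≤ ∫⁻ y in S k, D⁻¹ * ∏ j, ENNReal.ofReal |f j (y j)| :=
          setLIntegral_mono' (hSmeas k) hpt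
      _ = D⁻¹ * ∫⁻ y in S k, ∏ j, ENNReal.ofReal |f j (y j)| :=
          lintegral_const_mul' _ _ hDinvtop
      _ ≤ D⁻¹ * ∫⁻ y in Set.univ.pi (fun _ : Fin m => cube x r),
            ∏ j, ENNReal.ofReal |f j (y j)| := by
          exact mul_le_mul_right (lintegral_mono_set hsub2) _
      _ ≤ D⁻¹ * ∏ j, ∫⁻ y in cube x r, ENNReal.ofReal |f j y| := by
          refine mul_le_mul_right ?_ _
          rw [← lintegral_indicator (MeasurableSet.univ_pi fun _ => measurableSet_cube x r)]
          have hle : ∀ y : Fin m → EuclideanSpace ℝ (Fin n),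
              (Set.univ.pi fun _ : Fin m => cube x r).indicator
                (fun y => ∏ j, ENNReal.ofReal |f j (y j)|) y
                ≤ ∏ j, (cube x r).indicator (fun z => ENNReal.ofReal |f j z|) (y j) := by
            intro y
            by_cases hy : y ∈ Set.univ.pi fun _ : Fin m => cube x r
            · rw [Set.indicator_of_mem hy]
              refine Finset.prod_le_prod' fun j _ => ?_
              rw [Set.indicator_of_mem (hy j (Set.mem_univ j))]
            · rw [Set.indicator_of_notMem hy]; exact zero_le
          calc _ ≤ ∫⁻ y : Fin m → EuclideanSpace ℝ (Fin n),
                ∏ j, (cube x r).indicator (fun z => ENNReal.ofReal |f j z|) (y j) :=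
                lintegral_mono hle
            _ = ∏ j, ∫⁻ z, (cube x r).indicator (fun z => ENNReal.ofReal |f j z|) z :=
                lintegral_fin_pi_prod _ (fun j => (hgm j).indicator (measurableSet_cube x r))
            _ = ∏ j, ∫⁻ y in cube x r, ENNReal.ofReal |f j y| := by
                exact Finset.prod_congr rfl fun j _ =>
                  lintegral_indicator (measurableSet_cube x r) _
      _ ≤ D⁻¹ * (ENNReal.ofReal ((2*r)^n) ^ m * multiMax f x) :=
          mul_le_mul_right (key r hrpos) _
      _ = (ENNReal.ofReal ((2:ℝ)^(2*(n*m)) / δ) * multiMax f x) * (ENNReal.ofReal (1/2))^k := by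
          have hscal : D⁻¹ * ENNReal.ofReal ((2*r)^n) ^ m
              = ENNReal.ofReal ((2:ℝ)^(2*(n*m)) / δ) * (ENNReal.ofReal (1/2))^k := by
            have hlhs : D⁻¹ * ENNReal.ofReal ((2*r)^n) ^ m
                = ENNReal.ofReal ((2*r)^(n*m) / ((2^k*δ)^(n*m+1))) := by
              rw [← ENNReal.ofReal_pow (by positivity), ← pow_mul,
                ← ENNReal.div_eq_inv_mul, hD]
              exact (ENNReal.ofReal_div_of_pos (by positivity)).symm
            have hrhs : ENNReal.ofReal ((2:ℝ)^(2*(n*m)) / δ) * (ENNReal.ofReal (1/2))^k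
                = ENNReal.ofReal ((2:ℝ)^(2*(n*m)) / δ * (1/2)^k) := by
              rw [← ENNReal.ofReal_pow (by norm_num), ← ENNReal.ofReal_mul (by positivity)]
            rw [hlhs, hrhs]
            congr 1
            have h2r : 2 * r = 2^(k+2) * δ := by rw [hr]; ring
            rw [h2r, mul_pow, mul_pow, ← pow_mul, ← pow_mul,
              show (k+2)*(n*m) = k*(n*m) + 2*(n*m) by ring,
              show k*(n*m+1) = k*(n*m) + k by ring,
              pow_add, pow_add, pow_succ]
            have h2k : ((2:ℝ))^(k*(n*m)) ≠ 0 := by positivity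
            have h2k' : ((2:ℝ))^k ≠ 0 := by positivity
            have hδnm : δ^(n*m) ≠ 0 := by positivity
            field_simp
            ring_nf
            rw [← mul_pow]; norm_num
          rw [← mul_assoc, hscal]
          ring
  -- assemble
  have hq : ENNReal.ofReal (1/2 : ℝ) = 2⁻¹ := by
    rw [ENNReal.ofReal_div_of_pos (by norm_num), ENNReal.ofReal_one, ENNReal.ofReal_ofNat, one_div]
  calc (∫⁻ y in {y : Fin m → EuclideanSpace ℝ (Fin n) | δ ≤ ∑ j, dist x (y j)},
          (∏ j, ENNReal.ofReal |f j (y j)|) /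
            (ENNReal.ofReal (∑ j, dist x (y j))) ^ ((n * m : ℝ) + 1))
      ≤ ∫⁻ y in ⋃ k, S k,
          (∏ j, ENNReal.ofReal |f j (y j)|) /
            (ENNReal.ofReal (∑ j, dist x (y j))) ^ ((n * m : ℝ) + 1) :=
        lintegral_mono_set h_sub
    _ ≤ ∑' k, ∫⁻ y in S k,
          (∏ j, ENNReal.ofReal |f j (y j)|) /
            (ENNReal.ofReal (∑ j, dist x (y j))) ^ ((n * m : ℝ) + 1) :=
        lintegral_iUnion_le _ _
    _ ≤ ∑' k : ℕ, (ENNReal.ofReal ((2:ℝ)^(2*(n*m)) / δ) * multiMax f x)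
          * (ENNReal.ofReal (1/2))^k := ENNReal.tsum_le_tsum step
    _ = (ENNReal.ofReal ((2:ℝ)^(2*(n*m)) / δ) * multiMax f x)
          * ∑' k : ℕ, (ENNReal.ofReal (1/2))^k := ENNReal.tsum_mul_left
    _ = (ENNReal.ofReal ((2:ℝ)^(2*(n*m)) / δ) * multiMax f x) * 2 := by
        rw [ENNReal.tsum_geometric, hq, ENNReal.one_sub_inv_two, inv_inv]
    _ = ENNReal.ofReal ((2:ℝ)^(2*(n*m)+1) / δ) * multiMax f x := by
        have : ENNReal.ofReal ((2:ℝ)^(2*(n*m)) / δ) * 2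
            = ENNReal.ofReal ((2:ℝ)^(2*(n*m)+1) / δ) := by
          rw [show ((2:ℝ≥0∞)) = ENNReal.ofReal 2 by rw [ENNReal.ofReal_ofNat],
            ← ENNReal.ofReal_mul (by positivity)]
          congr 1
          rw [pow_succ]
          ring
        rw [mul_right_comm, this]
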